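/- arXiv:2508.01601 — 3 statements merged into one kernel-verified Lean document; each statement's English description precedes it below -/
import Mathlib

section
/- Let b : [0, ∞) → R be twice continuously differentiable, let p₁, p₂ > 0, and define φ₁ = b' + p₁·b. If b(0) ≥ 0, φ₁(0) ≥ 0, and φ₁'(t) + p₂·φ₁(t) ≥ 0 for all t ≥ 0, then b(t) ≥ 0 and φ₁(t) ≥ 0 for all t ≥ 0. -/
/-!
Both conclusions come from one comparison principle: if `f a ≥ 0` and `f' + p f ≥ 0` on
`[a, ∞)`, then the integrating factor makes `exp (p t) f t` nondecreasing there, so `f ≥ 0`.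
Applied to `φ₁` with rate `p₂` it gives `φ₁ ≥ 0`; since `φ₁ = b' + p₁ b`, that is exactly the
hypothesis of the same principle for `b` with rate `p₁`.
-/

open Real Set

lemma hasDerivAt_exp_mul_mul {f : ℝ → ℝ} {f' : ℝ} (p : ℝ) {t : ℝ} (hf : HasDerivAt f f' t) :
    HasDerivAt (fun s => exp (p * s) * f s) (exp (p * t) * (f' + p * f t)) t := by
  have hexp : HasDerivAt (fun s => exp (p * s)) (exp (p * t) * p) t := by
    simpa using ((hasDerivAt_id t).const_mul p).exp
  exact (hexp.mul hf).congr_deriv (by ring)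

lemma nonneg_of_deriv_add_mul_nonneg {f : ℝ → ℝ} {p a : ℝ} (hcont : ContinuousOn f (Ici a))
    (hdiff : DifferentiableOn ℝ f (Ioi a)) (ha : 0 ≤ f a)
    (h : ∀ t, a < t → 0 ≤ deriv f t + p * f t) {t : ℝ} (ht : a ≤ t) : 0 ≤ f t := by
  set g : ℝ → ℝ := fun s => exp (p * s) * f s
  have hg_deriv : ∀ s, a < s → HasDerivAt g (exp (p * s) * (deriv f s + p * f s)) s :=
    fun s hs => hasDerivAt_exp_mul_mul p
      ((hdiff s hs).differentiableAt (Ioi_mem_nhds hs)).hasDerivAt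
  have hg_mono : MonotoneOn g (Ici a) := by
    refine monotoneOn_of_deriv_nonneg (convex_Ici a)
      ((continuous_exp.comp (continuous_const_mul p)).continuousOn.mul hcont) ?_ ?_
    · rw [interior_Ici]
      exact fun s hs => (hg_deriv s hs).differentiableAt.differentiableWithinAt
    · rw [interior_Ici]
      intro s hs
      rw [(hg_deriv s hs).deriv]
      exact mul_nonneg (exp_pos _).le (h s hs)
  have hgt : 0 ≤ g t :=
    (mul_nonneg (exp_pos _).le ha).trans (hg_mono self_mem_Ici ht ht)
  exact nonneg_of_mul_nonneg_right hgt (exp_pos _)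

theorem stmt_6_general (b : ℝ → ℝ) (p₁ p₂ : ℝ)
    (hb : ContDiff ℝ 2 b)
    (φ₁ : ℝ → ℝ) (hφ₁ : ∀ t, φ₁ t = deriv b t + p₁ * b t)
    (h0 : 0 ≤ b 0) (hφ₁0 : 0 ≤ φ₁ 0)
    (hineq : ∀ t : ℝ, 0 ≤ t → deriv φ₁ t + p₂ * φ₁ t ≥ 0) :
    ∀ t : ℝ, 0 ≤ t → 0 ≤ b t ∧ 0 ≤ φ₁ t := by
  have hb_diff : Differentiable ℝ b := hb.differentiable two_ne_zero
  have hφ₁_diff : Differentiable ℝ φ₁ := by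
    rw [funext hφ₁]
    exact hb.differentiable_deriv_two.add (hb_diff.const_mul p₁)
  have hφ₁_nonneg : ∀ t, 0 ≤ t → 0 ≤ φ₁ t := fun t =>
    nonneg_of_deriv_add_mul_nonneg hφ₁_diff.continuous.continuousOn hφ₁_diff.differentiableOn
      hφ₁0 fun s hs => hineq s hs.le
  have hb_nonneg : ∀ t, 0 ≤ t → 0 ≤ b t := fun t =>
    nonneg_of_deriv_add_mul_nonneg hb_diff.continuous.continuousOn hb_diff.differentiableOn
      h0 fun s hs => hφ₁ s ▸ hφ₁_nonneg s hs.le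
  exact fun t ht => ⟨hb_nonneg t ht, hφ₁_nonneg t ht⟩

theorem stmt_6 (b : ℝ → ℝ) (p₁ p₂ : ℝ) (hp₁ : 0 < p₁) (hp₂ : 0 < p₂)
    (hb : ContDiff ℝ 2 b)
    (φ₁ : ℝ → ℝ) (hφ₁ : ∀ t, φ₁ t = deriv b t + p₁ * b t)
    (h0 : 0 ≤ b 0) (hφ₁0 : 0 ≤ φ₁ 0)
    (hineq : ∀ t : ℝ, 0 ≤ t → deriv φ₁ t + p₂ * φ₁ t ≥ 0) :
    ∀ t : ℝ, 0 ≤ t → 0 ≤ b t ∧ 0 ≤ φ₁ t :=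
  stmt_6_general b p₁ p₂ hb φ₁ hφ₁ h0 hφ₁0 hineq
end

section
/- Let m ≥ 1, b : [0, ∞) → R be m-times continuously differentiable, and p₁,…,p_m > 0. Define recursively ϑ₀ = b and ϑ_i = ϑ_{i−1}' + p_i·ϑ_{i−1} for i = 1,…,m. If ϑ_i(0) ≥ 0 for all i = 0,…,m−1 and ϑ_m(t) ≥ 0 for all t ≥ 0, then ϑ_i(t) ≥ 0 for all i = 0,…,m−1 and all t ≥ 0; in particular b(t) ≥ 0 for all t. -/
/-!
Multiplying by the integrating factor `exp (q t)` turns `θ' + q θ ≥ 0` into monotonicity of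
`exp (q t) θ t`, so `θ (0) ≥ 0` propagates to all `t ≥ 0`. Applied with `θ = ϑᵢ`, `q = pᵢ₊₁`, this
passes nonnegativity from `ϑᵢ₊₁` down to `ϑᵢ`, starting from `ϑₘ`; each `ϑᵢ` with `i < m` is
differentiable because `ϑᵢ` is `C^(m-i)`.
-/

open Set

theorem ContDiff.deriv_add_const_mul {𝕜 : Type*} [NontriviallyNormedField 𝕜] {f : 𝕜 → 𝕜}
    {n : WithTop ℕ∞} (hf : ContDiff 𝕜 (n + 1) f) (c : 𝕜) :
    ContDiff 𝕜 n (fun t => deriv f t + c * f t) :=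
  hf.deriv'.add (contDiff_const.mul (hf.of_le le_self_add))

theorem nonneg_of_deriv_add_mul_nonneg_s7 {θ : ℝ → ℝ} (q : ℝ) (hθ : Differentiable ℝ θ)
    (h0 : 0 ≤ θ 0) (hd : ∀ t, 0 ≤ t → 0 ≤ deriv θ t + q * θ t) {t : ℝ} (ht : 0 ≤ t) :
    0 ≤ θ t := by
  set g : ℝ → ℝ := fun t => Real.exp (q * t) * θ t
  have hg : ∀ t, HasDerivAt g (Real.exp (q * t) * (deriv θ t + q * θ t)) t := fun t => by
    have hexp := ((hasDerivAt_id t).const_mul q).exp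
    simp only [mul_one, id] at hexp
    exact (hexp.mul (hθ t).hasDerivAt).congr_deriv (by ring)
  have hmono : MonotoneOn g (Ici 0) := by
    refine monotoneOn_of_deriv_nonneg (convex_Ici 0)
      (fun s _ => (hg s).continuousAt.continuousWithinAt)
      (fun s _ => (hg s).differentiableAt.differentiableWithinAt) fun s hs => ?_
    rw [interior_Ici] at hs
    rw [(hg s).deriv]
    exact mul_nonneg (Real.exp_nonneg _) (hd s (le_of_lt hs))
  have hgt : θ 0 ≤ Real.exp (q * t) * θ t := by
    simpa [g] using hmono self_mem_Ici ht ht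
  exact nonneg_of_mul_nonneg_right (h0.trans hgt) (Real.exp_pos _)

theorem stmt_7_general (m : ℕ) (b : ℝ → ℝ) (p : ℕ → ℝ)
    (hb : ContDiff ℝ m b)
    (ϑ : ℕ → ℝ → ℝ) (hϑ0 : ϑ 0 = b)
    (hϑ : ∀ i, i < m → ∀ t, ϑ (i + 1) t = deriv (ϑ i) t + p (i + 1) * ϑ i t)
    (hinit : ∀ i, i < m → 0 ≤ ϑ i 0)
    (hfin : ∀ t : ℝ, 0 ≤ t → 0 ≤ ϑ m t) :
    (∀ i, i < m → ∀ t : ℝ, 0 ≤ t → 0 ≤ ϑ i t) ∧ ∀ t : ℝ, 0 ≤ t → 0 ≤ b t := by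
  have hrec : ∀ i, i < m → ϑ (i + 1) = fun t => deriv (ϑ i) t + p (i + 1) * ϑ i t :=
    fun i hi => funext (hϑ i hi)
  have hsmooth : ∀ i, i < m → ContDiff ℝ (m - i : ℕ) (ϑ i) := by
    intro i
    induction i with
    | zero => intro _; simpa [hϑ0] using hb
    | succ i ih =>
      intro hi
      have hcd : ContDiff ℝ ((m - (i + 1) : ℕ) + 1) (ϑ i) := by
        simpa [show m - i = m - (i + 1) + 1 by omega] using ih (by omega)
      rw [hrec i (by omega)]
      exact hcd.deriv_add_const_mul _
  have hdiff : ∀ i, i < m → Differentiable ℝ (ϑ i) := fun i hi =>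
    (hsmooth i hi).differentiable (by exact_mod_cast (by omega : m - i ≠ 0))
  have hnonneg : ∀ i, i ≤ m → ∀ t : ℝ, 0 ≤ t → 0 ≤ ϑ i t := fun i hi =>
    Nat.decreasingInduction (motive := fun i _ => ∀ t : ℝ, 0 ≤ t → 0 ≤ ϑ i t)
      (fun i hi hnext _ ht => nonneg_of_deriv_add_mul_nonneg_s7 (p (i + 1)) (hdiff i hi)
        (hinit i hi) (fun s hs => hϑ i hi s ▸ hnext s hs) ht)
      hfin hi
  exact ⟨fun i hi => hnonneg i hi.le, hϑ0 ▸ hnonneg 0 m.zero_le⟩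

theorem stmt_7 (m : ℕ) (hm : 1 ≤ m) (b : ℝ → ℝ) (p : ℕ → ℝ)
    (hp : ∀ i, 1 ≤ i → i ≤ m → 0 < p i)
    (hb : ContDiff ℝ m b)
    (ϑ : ℕ → ℝ → ℝ) (hϑ0 : ϑ 0 = b)
    (hϑ : ∀ i, i < m → ∀ t, ϑ (i + 1) t = deriv (ϑ i) t + p (i + 1) * ϑ i t)
    (hinit : ∀ i, i < m → 0 ≤ ϑ i 0)
    (hfin : ∀ t : ℝ, 0 ≤ t → 0 ≤ ϑ m t) :
    (∀ i, i < m → ∀ t : ℝ, 0 ≤ t → 0 ≤ ϑ i t) ∧ ∀ t : ℝ, 0 ≤ t → 0 ≤ b t :=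
  stmt_7_general m b p hb ϑ hϑ0 hϑ hinit hfin
end

section
/- Let b̃₀, …, b̃_m : [0,∞) → R be differentiable functions with b̃_{i−1}'(t) ≥ b̃_i(t) for all t and i = 1,…,m. Let p₁,…,p_m > 0 and let c^i_j be the coefficients of ∏_{l=1}^{i}(s+p_l). Define φ̃_i = b̃_i + Σ_{j=0}^{i−1} c^i_j b̃_j for i = 1,…,m and φ̃₀ = b̃₀. If φ̃_i(0) ≥ 0 for i = 0,…,m−1 and φ̃_m(t) ≥ 0 for all t ≥ 0, then φ̃_i(t) ≥ 0 for all i = 0,…,m−1 and t ≥ 0; in particular b̃₀(t) ≥ 0 for all t. -/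
/-!
Write `P i = ∏_{l ≤ i} (X + p_l)`, so that `φ_i = ∑_j (P i)_j b_j` and
`P (i+1) = P i * (X + p_{i+1})`. Since the coefficients of `P i` are nonnegative, the shift
`b_{j+1} ≤ b_j'` gives `φ_{i+1} ≤ φ_i' + p_{i+1} φ_i`. Hence `φ_{i+1} ≥ 0` on `[0, ∞)` and
`φ_i 0 ≥ 0` force `φ_i ≥ 0` on `[0, ∞)` (multiply by the integrating factor `exp (p_{i+1} t)`),
and a descent from `i = m` to `i = 0` gives the claim.
-/

open Polynomial Finset

lemma nonneg_of_hasDerivAt_add_mul_nonneg {G G' : ℝ → ℝ} {a : ℝ}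
    (hG : ∀ t, 0 ≤ t → HasDerivAt G (G' t) t) (h0 : 0 ≤ G 0)
    (hG' : ∀ t, 0 ≤ t → 0 ≤ G' t + a * G t) {t : ℝ} (ht : 0 ≤ t) : 0 ≤ G t := by
  set H : ℝ → ℝ := fun u => Real.exp (a * u) * G u
  have hH : ∀ u, 0 ≤ u → HasDerivAt H (Real.exp (a * u) * (G' u + a * G u)) u := fun u hu =>
    (((hasDerivAt_id u).const_mul a).exp.mul (hG u hu)).congr_deriv (by simp; ring)
  have hmono : MonotoneOn H (Set.Ici 0) := by
    refine monotoneOn_of_hasDerivWithinAt_nonneg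
      (f' := fun u => Real.exp (a * u) * (G' u + a * G u)) (convex_Ici 0)
      (fun u hu => (hH u hu).continuousAt.continuousWithinAt) (fun u hu => ?_) (fun u hu => ?_)
    all_goals rw [interior_Ici] at hu
    · exact (hH u (le_of_lt hu)).hasDerivWithinAt
    · exact mul_nonneg (Real.exp_nonneg _) (hG' u (le_of_lt hu))
  have hHt : 0 ≤ H t := by
    calc 0 ≤ H 0 := by simpa [H] using h0
      _ ≤ H t := hmono Set.self_mem_Ici ht ht
  exact (mul_nonneg_iff_of_pos_left (Real.exp_pos _)).mp hHt

lemma coeff_prod_nonneg {ι : Type*} {s : Finset ι} {f : ι → ℝ[X]}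
    (hf : ∀ i ∈ s, ∀ j, 0 ≤ (f i).coeff j) (j : ℕ) : 0 ≤ (∏ i ∈ s, f i).coeff j := by
  refine Finset.prod_induction f (fun q : ℝ[X] => ∀ j, 0 ≤ q.coeff j) (fun q r hq hr j => ?_)
    (fun j => ?_) hf j
  · rw [coeff_mul]
    exact sum_nonneg fun x _ => mul_nonneg (hq _) (hr _)
  · rw [coeff_one]
    split_ifs <;> norm_num

lemma coeff_X_add_C_nonneg {a : ℝ} (ha : 0 ≤ a) (j : ℕ) : 0 ≤ (X + C a).coeff j := by
  rcases j with _ | _ | j <;> simp [coeff_X, coeff_C, ha]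

lemma sum_coeff_mul_X_add_C {R : Type*} [CommRing R] {q : R[X]} {n : ℕ} (hq : q.natDegree ≤ n)
    (a : R) (c : ℕ → R) :
    ∑ j ∈ range (n + 2), (q * (X + C a)).coeff j * c j =
      ∑ j ∈ range (n + 1), q.coeff j * c (j + 1) + a * ∑ j ∈ range (n + 1), q.coeff j * c j := by
  have hX : ∑ j ∈ range (n + 2), (q * X).coeff j * c j =
      ∑ j ∈ range (n + 1), q.coeff j * c (j + 1) := by
    simp [sum_range_succ' _ (n + 1), coeff_mul_X]
  have hdeg : ∑ j ∈ range (n + 2), q.coeff j * c j = ∑ j ∈ range (n + 1), q.coeff j * c j := by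
    rw [sum_range_succ, coeff_eq_zero_of_natDegree_lt (Nat.lt_succ_of_le hq), zero_mul, add_zero]
  rw [← hX, ← hdeg, mul_sum, ← sum_add_distrib]
  refine sum_congr rfl fun j _ => ?_
  rw [mul_add, coeff_add, coeff_mul_C]
  ring

def coeffComb (q : ℝ[X]) (n : ℕ) (b : ℕ → ℝ → ℝ) (t : ℝ) : ℝ :=
  ∑ j ∈ range (n + 1), q.coeff j * b j t

lemma coeffComb_mul_X_add_C {q : ℝ[X]} {n : ℕ} (hq : q.natDegree ≤ n) (a : ℝ)
    (b : ℕ → ℝ → ℝ) (t : ℝ) :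
    coeffComb (q * (X + C a)) (n + 1) b t =
      coeffComb q n (fun j => b (j + 1)) t + a * coeffComb q n b t :=
  sum_coeff_mul_X_add_C hq a (fun j => b j t)

lemma coeffComb_of_monic {q : ℝ[X]} (hq : q.Monic) (b : ℕ → ℝ → ℝ) (t : ℝ) :
    coeffComb q q.natDegree b t = b q.natDegree t + ∑ j ∈ range q.natDegree, q.coeff j * b j t := by
  rw [coeffComb, sum_range_succ, hq.coeff_natDegree, one_mul, add_comm]

lemma hasDerivAt_coeffComb (q : ℝ[X]) {n : ℕ} {b : ℕ → ℝ → ℝ}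
    (hb : ∀ j ≤ n, Differentiable ℝ (b j)) (t : ℝ) :
    HasDerivAt (coeffComb q n b) (coeffComb q n (fun j => deriv (b j)) t) t := by
  unfold coeffComb
  refine HasDerivAt.fun_sum fun j hj => ((hb j ?_ t).hasDerivAt).const_mul _
  exact Nat.lt_succ_iff.mp (mem_range.mp hj)

lemma coeffComb_nonneg_of_mul_X_add_C {q : ℝ[X]} {n : ℕ} (hdeg : q.natDegree ≤ n)
    (hq : ∀ j, 0 ≤ q.coeff j) {b : ℕ → ℝ → ℝ} (hb : ∀ j ≤ n, Differentiable ℝ (b j))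
    (hlb : ∀ j ≤ n, ∀ t, b (j + 1) t ≤ deriv (b j) t) {a : ℝ} (h0 : 0 ≤ coeffComb q n b 0)
    (hnext : ∀ t, 0 ≤ t → 0 ≤ coeffComb (q * (X + C a)) (n + 1) b t) {t : ℝ} (ht : 0 ≤ t) :
    0 ≤ coeffComb q n b t := by
  refine nonneg_of_hasDerivAt_add_mul_nonneg (a := a)
    (fun s _ => hasDerivAt_coeffComb q hb s) h0 (fun s hs => ?_) ht
  have hshift : coeffComb q n (fun j => b (j + 1)) s ≤ coeffComb q n (fun j => deriv (b j)) s :=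
    sum_le_sum fun j hj =>
      mul_le_mul_of_nonneg_left (hlb j (Nat.lt_succ_iff.mp (mem_range.mp hj)) s) (hq j)
  calc 0 ≤ coeffComb (q * (X + C a)) (n + 1) b s := hnext s hs
    _ = coeffComb q n (fun j => b (j + 1)) s + a * coeffComb q n b s :=
      coeffComb_mul_X_add_C hdeg a b s
    _ ≤ coeffComb q n (fun j => deriv (b j)) s + a * coeffComb q n b s := by gcongr

theorem stmt_18_general (m : ℕ) (b : ℕ → ℝ → ℝ) (p : ℕ → ℝ)
    (hp : ∀ i, 1 ≤ i → i ≤ m → 0 < p i)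
    (hdiff : ∀ i, i ≤ m → Differentiable ℝ (b i))
    (hlb : ∀ i, 1 ≤ i → i ≤ m → ∀ t : ℝ, deriv (b (i - 1)) t ≥ b i t)
    (φ : ℕ → ℝ → ℝ)
    (hφ : ∀ i, i ≤ m → ∀ t : ℝ, φ i t = b i t +
      ∑ j ∈ Finset.range i,
        (∏ l ∈ Finset.Icc 1 i, (Polynomial.X + Polynomial.C (p l))).coeff j * b j t)
    (hinit : ∀ i, i < m → 0 ≤ φ i 0)
    (hfin : ∀ t : ℝ, 0 ≤ t → 0 ≤ φ m t) :
    (∀ i, i < m → ∀ t : ℝ, 0 ≤ t → 0 ≤ φ i t) ∧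
    ∀ t : ℝ, 0 ≤ t → 0 ≤ b 0 t := by
  set P : ℕ → ℝ[X] := fun i => ∏ l ∈ Icc 1 i, (X + C (p l))
  have hP_monic (i : ℕ) : (P i).Monic := monic_prod_of_monic _ _ fun l _ => monic_X_add_C _
  have hP_natDegree (i : ℕ) : (P i).natDegree = i := by
    simp [P, natDegree_prod_of_monic _ _ fun l _ => monic_X_add_C _]
  have hP_succ (i : ℕ) : P (i + 1) = P i * (X + C (p (i + 1))) :=
    prod_Icc_succ_top (Nat.le_add_left 1 i) _
  have hφP (i : ℕ) (hi : i ≤ m) : φ i = coeffComb (P i) i b := by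
    funext t
    rw [hφ i hi t]
    simpa only [hP_natDegree] using (coeffComb_of_monic (hP_monic i) b t).symm
  have hφ_nonneg (i : ℕ) (hi : i ≤ m) : ∀ t, 0 ≤ t → 0 ≤ φ i t := by
    induction hi using Nat.decreasingInduction with
    | self => exact hfin
    | of_succ i hi ih =>
      intro t ht
      rw [hφP i hi.le]
      refine coeffComb_nonneg_of_mul_X_add_C (hP_natDegree i).le
        (coeff_prod_nonneg fun l hl _ => coeff_X_add_C_nonneg
          (hp l (mem_Icc.mp hl).1 (by grind)).le _)
        (fun j hj => hdiff j (by omega)) (fun j hj s => hlb (j + 1) (by omega) (by omega) s)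
        (a := p (i + 1)) (hφP i hi.le ▸ hinit i hi) (fun s hs => ?_) ht
      rw [← hP_succ, ← hφP (i + 1) hi]
      exact ih s hs
  refine ⟨fun i hi => hφ_nonneg i hi.le, fun t ht => ?_⟩
  simpa [hφ 0 (Nat.zero_le m)] using hφ_nonneg 0 (Nat.zero_le m) t ht

theorem stmt_18 (m : ℕ) (hm : 1 ≤ m) (b : ℕ → ℝ → ℝ) (p : ℕ → ℝ)
    (hp : ∀ i, 1 ≤ i → i ≤ m → 0 < p i)
    (hdiff : ∀ i, i ≤ m → Differentiable ℝ (b i))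
    (hlb : ∀ i, 1 ≤ i → i ≤ m → ∀ t : ℝ, deriv (b (i - 1)) t ≥ b i t)
    (φ : ℕ → ℝ → ℝ)
    (hφ : ∀ i, i ≤ m → ∀ t : ℝ, φ i t = b i t +
      ∑ j ∈ Finset.range i,
        (∏ l ∈ Finset.Icc 1 i, (Polynomial.X + Polynomial.C (p l))).coeff j * b j t)
    (hinit : ∀ i, i < m → 0 ≤ φ i 0)
    (hfin : ∀ t : ℝ, 0 ≤ t → 0 ≤ φ m t) :
    (∀ i, i < m → ∀ t : ℝ, 0 ≤ t → 0 ≤ φ i t) ∧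
    ∀ t : ℝ, 0 ≤ t → 0 ≤ b 0 t :=
  stmt_18_general m b p hp hdiff hlb φ hφ hinit hfin
end
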